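/- arXiv:2603.21355 — 5 statements merged into one kernel-verified Lean document; each statement's English description precedes it below -/
import Mathlib

section
/- Let V be a finite-dimensional real vector space equipped with a nondegenerate symmetric bilinear form B of signature (n,n), and let E : V → V be a linear operator satisfying E² = -1 and B(E x, y) = B(x, E y) for all x, y. Then the symmetric bilinear form (x,y) ↦ B(x, E y) is nondegenerate and has signature (n,n). -/
/-- A symmetric bilinear form has signature `(n,n)`: there is an orthogonal
direct-sum decomposition into an `n`-dimensional positive definite part and an
`n`-dimensional negative definite part. -/
def HasSignatureNN {V : Type*} [AddCommGroup V] [Module ℝ V]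
    (B : V →ₗ[ℝ] V →ₗ[ℝ] ℝ) (n : ℕ) : Prop :=
  ∃ P N : Submodule ℝ V, IsCompl P N ∧
    (∀ x ∈ P, ∀ y ∈ N, B x y = 0) ∧
    (∀ x ∈ P, x ≠ 0 → 0 < B x x) ∧
    (∀ x ∈ N, x ≠ 0 → B x x < 0) ∧
    Module.finrank ℝ P = n ∧ Module.finrank ℝ N = n

open Module

/-- Diagonalization: a symmetric bilinear form on a finite-dimensional real vector space
which is nondegenerate splits into a positive definite and a negative definite part. -/
lemma aux_diagonalize {V : Type*} [AddCommGroup V] [Module ℝ V] [FiniteDimensional ℝ V]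
    (B : V →ₗ[ℝ] V →ₗ[ℝ] ℝ)
    (hs : ∀ x y : V, B x y = B y x)
    (hnd : ∀ x : V, (∀ y : V, B x y = 0) → x = 0) :
    ∃ P N : Submodule ℝ V, IsCompl P N ∧
      (∀ x ∈ P, ∀ y ∈ N, B x y = 0) ∧
      (∀ x ∈ P, x ≠ 0 → 0 < B x x) ∧
      (∀ x ∈ N, x ≠ 0 → B x x < 0) := by
  obtain ⟨v, hv⟩ := LinearMap.BilinForm.exists_orthogonal_basis
    (B := B) ⟨fun x y => by simpa using hs x y⟩
  have hvo : ∀ i j, i ≠ j → B (v i) (v j) = 0 := fun i j h => hv h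
  have hdne : ∀ i, B (v i) (v i) ≠ 0 := fun i =>
    LinearMap.IsOrthoᵢ.not_isOrtho_basis_self_of_separatingLeft hv (fun x hx => hnd x hx) i
  -- expansion of B in the basis
  have expand : ∀ x y : V, B x y = ∑ i, ∑ j, v.repr x i * v.repr y j * B (v i) (v j) := by
    intro x y
    conv_lhs => rw [← v.sum_repr x, ← v.sum_repr y]
    simp only [map_sum, map_smul, LinearMap.sum_apply, LinearMap.smul_apply, smul_eq_mul,
      Finset.mul_sum]
    rw [Finset.sum_comm]
    exact Finset.sum_congr rfl fun i _ => Finset.sum_congr rfl fun j _ => by ring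
  have diag : ∀ x : V, B x x = ∑ i, v.repr x i * v.repr x i * B (v i) (v i) := by
    intro x
    rw [expand]
    refine Finset.sum_congr rfl fun i _ => ?_
    rw [Finset.sum_eq_single i]
    · intro j _ hj
      rw [hvo i j (Ne.symm hj), mul_zero]
    · intro h; exact absurd (Finset.mem_univ i) h
  set s : Set (Fin (finrank ℝ V)) := {i | 0 < B (v i) (v i)} with hs_def
  refine ⟨Submodule.span ℝ (v '' s), Submodule.span ℝ (v '' sᶜ), ?_, ?_, ?_, ?_⟩
  · constructor
    · rw [Submodule.disjoint_def]
      intro x hx1 hx2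
      rw [Basis.mem_span_image] at hx1 hx2
      have : (v.repr x).support = ∅ := by
        rw [← Finset.coe_eq_empty]
        have := Set.subset_inter hx1 hx2
        rwa [Set.inter_compl_self, Set.subset_empty_iff] at this
      have : v.repr x = 0 := Finsupp.support_eq_empty.mp this
      have := congrArg v.repr.symm this
      simpa using this
    · rw [codisjoint_iff]
      rw [← Submodule.span_union, ← Set.image_union, Set.union_compl_self, Set.image_univ,
        Basis.span_eq]
  · -- orthogonality
    intro x hx y hy
    rw [Basis.mem_span_image] at hx hy
    rw [expand]
    refine Finset.sum_eq_zero fun i _ => Finset.sum_eq_zero fun j _ => ?_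
    by_cases hi : v.repr x i = 0
    · rw [hi, zero_mul, zero_mul]
    by_cases hjz : v.repr y j = 0
    · rw [hjz, mul_zero, zero_mul]
    have his : i ∈ s := hx (Finsupp.mem_support_iff.mpr hi)
    have hjs : j ∈ sᶜ := hy (Finsupp.mem_support_iff.mpr hjz)
    have hij : i ≠ j := fun h => hjs (h ▸ his)
    rw [hvo i j hij, mul_zero]
  · -- positive definiteness on P
    intro x hx hx0
    rw [Basis.mem_span_image] at hx
    rw [diag]
    have hne : (v.repr x).support.Nonempty := by
      rw [Finsupp.support_nonempty_iff]
      intro h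
      exact hx0 (by simpa using congrArg v.repr.symm h)
    obtain ⟨i, hi⟩ := hne
    refine Finset.sum_pos' (fun j _ => ?_) ⟨i, Finset.mem_univ i, ?_⟩
    · by_cases hj : v.repr x j = 0
      · rw [hj]; simp
      · have hjs : j ∈ s := hx (Finsupp.mem_support_iff.mpr hj)
        have h1 : 0 < B (v j) (v j) := hjs
        have h2 : 0 ≤ v.repr x j * v.repr x j := mul_self_nonneg _
        nlinarith
    · have hi' : v.repr x i ≠ 0 := Finsupp.mem_support_iff.mp hi
      have his : i ∈ s := hx hi
      have h1 : 0 < B (v i) (v i) := his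
      exact mul_pos (mul_self_pos.mpr hi') h1
  · -- negative definiteness on N
    intro x hx hx0
    rw [Basis.mem_span_image] at hx
    rw [diag]
    have hne : (v.repr x).support.Nonempty := by
      rw [Finsupp.support_nonempty_iff]
      intro h
      exact hx0 (by simpa using congrArg v.repr.symm h)
    obtain ⟨i, hi⟩ := hne
    have key : 0 < ∑ j, -(v.repr x j * v.repr x j * B (v j) (v j)) := by
      refine Finset.sum_pos' (fun j _ => ?_) ⟨i, Finset.mem_univ i, ?_⟩
      · by_cases hj : v.repr x j = 0
        · rw [hj]; simp
        · have hjs : j ∈ sᶜ := hx (Finsupp.mem_support_iff.mpr hj)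
          have h1 : ¬ (0 < B (v j) (v j)) := hjs
          have h2 : B (v j) (v j) < 0 := lt_of_le_of_ne (not_lt.mp h1) (hdne j)
          have : 0 < v.repr x j * v.repr x j := by
            rcases lt_or_gt_of_ne hj with h | h
            · exact mul_pos_of_neg_of_neg h h
            · exact mul_pos h h
          nlinarith
      · have hi' : v.repr x i ≠ 0 := Finsupp.mem_support_iff.mp hi
        have his : i ∈ sᶜ := hx hi
        have h1 : ¬ (0 < B (v i) (v i)) := his
        have h2 : B (v i) (v i) < 0 := lt_of_le_of_ne (not_lt.mp h1) (hdne i)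
        have : 0 < v.repr x i * v.repr x i := by
          rcases lt_or_gt_of_ne hi' with h | h
          · exact mul_pos_of_neg_of_neg h h
          · exact mul_pos h h
        nlinarith
    rw [Finset.sum_neg_distrib] at key
    linarith

theorem euclidean_form_signature
    {V : Type*} [AddCommGroup V] [Module ℝ V] [FiniteDimensional ℝ V] (n : ℕ)
    (B : V →ₗ[ℝ] V →ₗ[ℝ] ℝ)
    (hBsymm : ∀ x y : V, B x y = B y x)
    (hBnondeg : ∀ x : V, (∀ y : V, B x y = 0) → x = 0)
    (hBsig : HasSignatureNN B n)
    (E : V →ₗ[ℝ] V)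
    (hE2 : E ∘ₗ E = -LinearMap.id)
    (hEsa : ∀ x y : V, B (E x) y = B x (E y)) :
    (∀ x : V, (∀ y : V, B x (E y) = 0) → x = 0) ∧
      HasSignatureNN (B.compl₂ E) n := by
  have hE2' : ∀ x : V, E (E x) = -x := by
    intro x
    have := congrFun (congrArg DFunLike.coe hE2) x
    simpa using this
  have hEinj : Function.Injective E := by
    intro a b h
    have : E (E a) = E (E b) := congrArg E h
    rw [hE2' a, hE2' b] at this
    exact neg_injective this
  -- B' := B.compl₂ E
  have hB' : ∀ x y : V, (B.compl₂ E) x y = B x (E y) := fun x y => rfl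
  have hB'symm : ∀ x y : V, (B.compl₂ E) x y = (B.compl₂ E) y x := by
    intro x y
    rw [hB', hB', ← hEsa, hBsymm]
  have hB'nondeg : ∀ x : V, (∀ y : V, B x (E y) = 0) → x = 0 := by
    intro x hx
    apply hBnondeg
    intro z
    have : z = E (-(E z)) := by rw [map_neg, hE2' z, neg_neg]
    rw [this]
    exact hx _
  refine ⟨hB'nondeg, ?_⟩
  -- dimension of V is 2n
  obtain ⟨P0, N0, hc0, _, _, _, hP0, hN0⟩ := hBsig
  have hdim : finrank ℝ V = 2 * n := by
    have := Submodule.finrank_add_eq_of_isCompl hc0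
    omega
  -- diagonalize B'
  obtain ⟨P, N, hc, horth, hpos, hneg⟩ :=
    aux_diagonalize (B.compl₂ E) hB'symm (fun x hx => hB'nondeg x hx)
  have hPN : finrank ℝ P + finrank ℝ N = 2 * n := by
    rw [Submodule.finrank_add_eq_of_isCompl hc, hdim]
  -- E is an anti-isometry of B'
  have hanti : ∀ x : V, (B.compl₂ E) (E x) (E x) = -((B.compl₂ E) x x) := by
    intro x
    rw [hB', hB', hE2' x, map_neg, hEsa]
  -- E maps P into a negative definite subspace and N into a positive definite one
  have hmapdim : ∀ W : Submodule ℝ V, finrank ℝ (W.map E) = finrank ℝ W := by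
    intro W
    exact (LinearEquiv.finrank_eq (Submodule.equivMapOfInjective E hEinj W)).symm
  have hPmapneg : ∀ x ∈ P.map E, x ≠ 0 → (B.compl₂ E) x x < 0 := by
    rintro x ⟨y, hy, rfl⟩ hx0
    have hy0 : y ≠ 0 := fun h => hx0 (by rw [h, map_zero])
    rw [hanti]
    linarith [hpos y hy hy0]
  have hNmappos : ∀ x ∈ N.map E, x ≠ 0 → 0 < (B.compl₂ E) x x := by
    rintro x ⟨y, hy, rfl⟩ hx0
    have hy0 : y ≠ 0 := fun h => hx0 (by rw [h, map_zero])
    rw [hanti]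
    linarith [hneg y hy hy0]
  -- disjointness arguments
  have hdisj1 : P ⊓ P.map E = ⊥ := by
    rw [Submodule.eq_bot_iff]
    rintro x ⟨h1, h2⟩
    by_contra hx0
    linarith [hpos x h1 hx0, hPmapneg x h2 hx0]
  have hdisj2 : N ⊓ N.map E = ⊥ := by
    rw [Submodule.eq_bot_iff]
    rintro x ⟨h1, h2⟩
    by_contra hx0
    linarith [hneg x h1 hx0, hNmappos x h2 hx0]
  have h2p : 2 * finrank ℝ P ≤ 2 * n := by
    have := Submodule.finrank_sup_add_finrank_inf_eq P (P.map E)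
    rw [hdisj1] at this
    have hle : finrank ℝ ↥(P ⊔ P.map E) ≤ finrank ℝ V := Submodule.finrank_le _
    simp only [finrank_bot, add_zero] at this
    rw [hmapdim P] at this
    omega
  have h2q : 2 * finrank ℝ N ≤ 2 * n := by
    have := Submodule.finrank_sup_add_finrank_inf_eq N (N.map E)
    rw [hdisj2] at this
    have hle : finrank ℝ ↥(N ⊔ N.map E) ≤ finrank ℝ V := Submodule.finrank_le _
    simp only [finrank_bot, add_zero] at this
    rw [hmapdim N] at this
    omega
  exact ⟨P, N, hc, horth, hpos, hneg, by omega, by omega⟩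
end

section
/- With the same setup (D = K̃ ⊕ K with canonical split pairing, S, S̃ symmetric invertible, A, Ã antisymmetric), the block operator E₊(α,a) = (S̃⁻¹Ãα + S̃⁻¹a, -S⁻¹α + S⁻¹Aa) satisfies E₊² = -1 if and only if S̃S - ÃA = 1 on K and S̃A + ÃS = 0. -/
theorem euclidean_block_operator_complex_structure
    {Kt K : Type*} [AddCommGroup Kt] [Module ℝ Kt] [AddCommGroup K] [Module ℝ K]
    [FiniteDimensional ℝ Kt] [FiniteDimensional ℝ K]
    (p : Kt →ₗ[ℝ] K →ₗ[ℝ] ℝ)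
    (hpnd₁ : ∀ α : Kt, (∀ a : K, p α a = 0) → α = 0)
    (hpnd₂ : ∀ a : K, (∀ α : Kt, p α a = 0) → a = 0)
    (S : K →ₗ[ℝ] Kt) (Sinv : Kt →ₗ[ℝ] K)
    (hS₁ : Sinv ∘ₗ S = LinearMap.id) (hS₂ : S ∘ₗ Sinv = LinearMap.id)
    (hSsym : ∀ a b : K, p (S a) b = p (S b) a)
    (St : Kt →ₗ[ℝ] K) (Stinv : K →ₗ[ℝ] Kt)
    (hSt₁ : Stinv ∘ₗ St = LinearMap.id) (hSt₂ : St ∘ₗ Stinv = LinearMap.id)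
    (hStsym : ∀ α β : Kt, p α (St β) = p β (St α))
    (A : K →ₗ[ℝ] Kt)
    (hAanti : ∀ a b : K, p (A a) b = - p (A b) a)
    (At : Kt →ₗ[ℝ] K)
    (hAtanti : ∀ α β : Kt, p α (At β) = - p β (At α)) :
    (∀ v : Kt × K,
        (fun w : Kt × K => (Stinv (At w.1) + Stinv w.2, -(Sinv w.1) + Sinv (A w.2)))
          ((fun w : Kt × K =>
            (Stinv (At w.1) + Stinv w.2, -(Sinv w.1) + Sinv (A w.2))) v) = -v)
      ↔ ((∀ a : K, St (S a) - At (A a) = a) ∧ (∀ a : K, St (A a) + At (S a) = 0)) := by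
  have hS₁' : ∀ a : K, Sinv (S a) = a := fun a => DFunLike.congr_fun hS₁ a
  have hS₂' : ∀ α : Kt, S (Sinv α) = α := fun α => DFunLike.congr_fun hS₂ α
  have hSt₁' : ∀ α : Kt, Stinv (St α) = α := fun α => DFunLike.congr_fun hSt₁ α
  have hSt₂' : ∀ a : K, St (Stinv a) = a := fun a => DFunLike.congr_fun hSt₂ a
  constructor
  · intro h
    have e2α : ∀ α : Kt, -(Sinv (Stinv (At α))) - Sinv (A (Sinv α)) = 0 := by
      intro α
      have := congrArg Prod.snd (h (α, 0))
      simpa [map_zero, sub_eq_add_neg, map_neg] using this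
    have e2a : ∀ a : K, -(Sinv (Stinv a)) + Sinv (A (Sinv (A a))) = -a := by
      intro a
      have := congrArg Prod.snd (h (0, a))
      simpa [map_zero] using this
    have hAt' : ∀ α : Kt, At α = -(St (A (Sinv α))) := by
      intro α
      have h1 := e2α α
      have h2 : Sinv (Stinv (At α)) = -(Sinv (A (Sinv α))) := by
        linear_combination (norm := abel) -h1
      have h3 := congrArg S h2
      rw [hS₂', map_neg, hS₂'] at h3
      have h4 := congrArg St h3
      rw [hSt₂', map_neg] at h4
      exact h4
    have hStinv : ∀ a : K, Stinv a = S a + A (Sinv (A a)) := by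
      intro a
      have h1 := e2a a
      have h2 := congrArg S h1
      rw [map_add, map_neg, map_neg, hS₂', hS₂'] at h2
      linear_combination (norm := abel) -h2
    constructor
    · intro a
      have h1 := congrArg St (hStinv a)
      rw [hSt₂', map_add] at h1
      rw [hAt' (A a)]
      linear_combination (norm := abel) -h1
    · intro a
      rw [hAt' (S a), hS₁']
      abel
  · rintro ⟨h1, h2⟩
    have hdual2 : ∀ α : Kt, A (St α) + S (At α) = 0 := by
      intro α
      apply hpnd₁
      intro b
      have k1 : p (A (St α)) b = -(p α (St (A b))) := by
        rw [hAanti, hStsym]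
      have k2 : p (S (At α)) b = -(p α (At (S b))) := by
        rw [hSsym, ← hAtanti]
      have k3 : p α (St (A b)) + p α (At (S b)) = 0 := by
        rw [← map_add, h2 b, map_zero]
      rw [map_add, LinearMap.add_apply, k1, k2]
      linarith
    have hdual1 : ∀ α : Kt, S (St α) - A (At α) = α := by
      intro α
      have key : S (St α) - A (At α) - α = 0 := by
        apply hpnd₁
        intro b
        have k1 : p (S (St α)) b = p α (St (S b)) := by rw [hSsym, hStsym]
        have k2 : p (A (At α)) b = p α (At (A b)) := by
          rw [hAanti, hAtanti]; ring_nf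
        have k3 : p α (St (S b)) - p α (At (A b)) = p α b := by
          rw [← map_sub, h1 b]
        simp only [map_sub, LinearMap.sub_apply, k1, k2]
        linarith
      linear_combination (norm := abel) key
    have hAt' : ∀ a : K, At (S a) = -(St (A a)) := by
      intro a
      linear_combination (norm := abel) h2 a
    have hAtα : ∀ α : Kt, At α = -(St (A (Sinv α))) := by
      intro α
      have := hAt' (Sinv α)
      rwa [hS₂'] at this
    have hAtStinv : ∀ a : K, At (Stinv a) = -(Sinv (A a)) := by
      intro a
      have h3 := hdual2 (Stinv a)
      rw [hSt₂'] at h3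
      have h4 : S (At (Stinv a)) = -(A a) := by linear_combination (norm := abel) h3
      have h5 := congrArg Sinv h4
      rwa [hS₁', map_neg] at h5
    have hStinv : ∀ a : K, Stinv a = S a + A (Sinv (A a)) := by
      intro a
      have h3 := hdual1 (Stinv a)
      rw [hSt₂', hAtStinv, map_neg] at h3
      linear_combination (norm := abel) -h3
    intro v
    obtain ⟨α, a⟩ := v
    simp only
    have c0 : Stinv (At α) = -(A (Sinv α)) := by
      rw [hAtα, map_neg, hSt₁']
    have cAtA : At (A (Sinv α)) = St α - Sinv α := by
      have h3 := h1 (Sinv α)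
      rw [hS₂'] at h3
      linear_combination (norm := abel) -h3
    have comp1 : Stinv (At (Stinv (At α) + Stinv a)) + Stinv (-(Sinv α) + Sinv (A a)) = -α := by
      rw [c0, map_add, map_neg, cAtA, hAtStinv]
      simp only [map_add, map_neg, map_sub, hSt₁']
      abel
    have comp2 : -(Sinv (Stinv (At α) + Stinv a)) + Sinv (A (-(Sinv α) + Sinv (A a))) = -a := by
      rw [c0, hStinv a]
      simp only [map_add, map_neg, hS₁']
      abel
    rw [Prod.neg_mk]
    exact Prod.ext comp1 comp2
end

section
/- Let D = K̃ ⊕ K with the canonical split pairing and let E₋ be a B-self-adjoint involution with B(·,E₋·) positive definite. Write E₋ in block form E₋ = [[X, Y],[Z, W]] relative to the decomposition D = K̃ ⊕ K. Then Y : K → K̃ and Z : K̃ → K are symmetric and invertible, W^t = X, and the operators A₋ := -Z⁻¹W and Ã₋ := -Y⁻¹X are antisymmetric; consequently E₋ = [[-S̃₋⁻¹Ã₋, S̃₋⁻¹],[S₋⁻¹, -S₋⁻¹A₋]] with S̃₋ = Y⁻¹, S₋ = Z⁻¹ symmetric invertible. -/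
open Module

theorem lorentzian_block_structure
    {Kt K : Type*} [AddCommGroup Kt] [Module ℝ Kt] [AddCommGroup K] [Module ℝ K]
    [FiniteDimensional ℝ Kt] [FiniteDimensional ℝ K]
    (p : Kt →ₗ[ℝ] K →ₗ[ℝ] ℝ)
    (hpnd₁ : ∀ α : Kt, (∀ a : K, p α a = 0) → α = 0)
    (hpnd₂ : ∀ a : K, (∀ α : Kt, p α a = 0) → a = 0)
    (E : (Kt × K) →ₗ[ℝ] (Kt × K))
    (hE2 : ∀ v : Kt × K, E (E v) = v)
    -- self-adjointness of `E` with respect to the canonical split form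
    -- `B((α,a),(β,b)) = ⟨α,b⟩ + ⟨β,a⟩`
    (hEsa : ∀ u v : Kt × K,
      p (E u).1 v.2 + p v.1 (E u).2 = p u.1 (E v).2 + p (E v).1 u.2)
    -- positivity of `B(·, E ·)`
    (hpos : ∀ v : Kt × K, v ≠ 0 → 0 < p v.1 (E v).2 + p (E v).1 v.2) :
    -- with blocks `X := fst ∘ E ∘ inl`, `Y := fst ∘ E ∘ inr`,
    -- `Z := snd ∘ E ∘ inl`, `W := snd ∘ E ∘ inr`:
    (∀ a b : K, p (E (0, a)).1 b = p (E (0, b)).1 a) ∧            -- `Y` symmetric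
    Function.Bijective (fun a : K => (E (0, a)).1) ∧              -- `Y` invertible
    (∀ α β : Kt, p α (E (β, 0)).2 = p β (E (α, 0)).2) ∧           -- `Z` symmetric
    Function.Bijective (fun α : Kt => (E (α, 0)).2) ∧             -- `Z` invertible
    (∀ (α : Kt) (a : K), p α (E (0, a)).2 = p (E (α, 0)).1 a) ∧   -- `Wᵗ = X`
    (∀ (Yinv : Kt →ₗ[ℝ] K) (Zinv : K →ₗ[ℝ] Kt),
      (∀ a : K, Yinv (E (0, a)).1 = a) → (∀ α : Kt, (E (0, Yinv α)).1 = α) →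
      (∀ α : Kt, Zinv (E (α, 0)).2 = α) → (∀ a : K, (E (Zinv a, 0)).2 = a) →
        -- `A₋ := -Z⁻¹ ∘ W` is antisymmetric
        ((∀ a b : K, p (-(Zinv (E (0, a)).2)) b = - p (-(Zinv (E (0, b)).2)) a) ∧
        -- `Ã₋ := -Y⁻¹ ∘ X` is antisymmetric
         (∀ α β : Kt, p α (-(Yinv (E (β, 0)).1)) = - p β (-(Yinv (E (α, 0)).1))))) := by
  -- dimension equality from nondegeneracy of the pairing
  have hdim : finrank ℝ Kt = finrank ℝ K := by
    have h1 : Function.Injective (p : Kt →ₗ[ℝ] Module.Dual ℝ K) := by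
      rw [← LinearMap.ker_eq_bot, LinearMap.ker_eq_bot']
      intro α hα
      exact hpnd₁ α fun a => congrFun (congrArg DFunLike.coe hα) a
    have h2 : Function.Injective (p.flip : K →ₗ[ℝ] Module.Dual ℝ Kt) := by
      rw [← LinearMap.ker_eq_bot, LinearMap.ker_eq_bot']
      intro a ha
      exact hpnd₂ a fun α => congrFun (congrArg DFunLike.coe ha) α
    have l1 := LinearMap.finrank_le_finrank_of_injective h1
    have l2 := LinearMap.finrank_le_finrank_of_injective h2
    rw [Subspace.dual_finrank_eq] at l1 l2
    omega
  -- symmetry of Y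
  have hYsym : ∀ a b : K, p (E (0, a)).1 b = p (E (0, b)).1 a := by
    intro a b
    have := hEsa (0, a) (0, b)
    simpa using this
  -- symmetry of Z
  have hZsym : ∀ α β : Kt, p α (E (β, 0)).2 = p β (E (α, 0)).2 := by
    intro α β
    have := hEsa (β, 0) (α, 0)
    simpa using this
  -- Wᵗ = X
  have hWX : ∀ (α : Kt) (a : K), p α (E (0, a)).2 = p (E (α, 0)).1 a := by
    intro α a
    have := hEsa (α, 0) (0, a)
    simpa using this.symm
  -- the block maps as linear maps
  set Ylm : K →ₗ[ℝ] Kt :=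
    (LinearMap.fst ℝ Kt K) ∘ₗ E ∘ₗ (LinearMap.inr ℝ Kt K) with hYlm
  set Zlm : Kt →ₗ[ℝ] K :=
    (LinearMap.snd ℝ Kt K) ∘ₗ E ∘ₗ (LinearMap.inl ℝ Kt K) with hZlm
  have hYbij : Function.Bijective Ylm := by
    have hinj : Function.Injective Ylm := by
      rw [← LinearMap.ker_eq_bot, LinearMap.ker_eq_bot']
      intro a ha
      by_contra hne
      have := hpos (0, a) (by simp [hne])
      have h0 : (E (0, a)).1 = 0 := ha
      simp [h0] at this
    exact ⟨hinj,
      (LinearMap.injective_iff_surjective_of_finrank_eq_finrank hdim.symm).mp hinj⟩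
  have hZbij : Function.Bijective Zlm := by
    have hinj : Function.Injective Zlm := by
      rw [← LinearMap.ker_eq_bot, LinearMap.ker_eq_bot']
      intro α hα
      by_contra hne
      have := hpos (α, 0) (by simp [hne])
      have h0 : (E (α, 0)).2 = 0 := hα
      simp [h0] at this
    exact ⟨hinj,
      (LinearMap.injective_iff_surjective_of_finrank_eq_finrank hdim).mp hinj⟩
  have hYbij' : Function.Bijective (fun a : K => (E (0, a)).1) := by
    convert hYbij using 1
    rfl
  have hZbij' : Function.Bijective (fun α : Kt => (E (α, 0)).2) := by
    convert hZbij using 1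
    rfl
  refine ⟨hYsym, hYbij', hZsym, hZbij', hWX, ?_⟩
  intro Yinv Zinv hY1 hY2 hZ1 hZ2
  -- block relations from E² = 1
  have hXYYW : ∀ a : K, (E ((E (0, a)).1, 0)).1 + (E (0, (E (0, a)).2)).1 = 0 := by
    intro a
    have h : E ((E (0, a)).1, 0) + E (0, (E (0, a)).2) = ((0 : Kt), a) := by
      rw [← map_add]
      simpa using hE2 (0, a)
    simpa using congrArg Prod.fst h
  have hZXWZ : ∀ α : Kt, (E ((E (α, 0)).1, 0)).2 + (E (0, (E (α, 0)).2)).2 = 0 := by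
    intro α
    have h : E ((E (α, 0)).1, 0) + E (0, (E (α, 0)).2) = (α, (0 : K)) := by
      rw [← map_add]
      simpa using hE2 (α, 0)
    simpa using congrArg Prod.snd h
  constructor
  · -- antisymmetry of A₋ = -Z⁻¹ W
    intro c d
    have hβ : (E (Zinv d, 0)).2 = d := hZ2 d
    have t1 : p (Zinv (E (0, c)).2) d = p (E (Zinv d, 0)).1 c := by
      conv_lhs => rw [← hβ]
      rw [hZsym, hZ2, hWX]
    have t2 : Zinv (E (0, d)).2 = -(E (Zinv d, 0)).1 := by
      have hrel := hZXWZ (Zinv d)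
      rw [hβ] at hrel
      have h1 : (E (0, d)).2 = -((E ((E (Zinv d, 0)).1, 0)).2) := by
        rw [eq_neg_iff_add_eq_zero, add_comm]; exact hrel
      have h2 : -((E ((E (Zinv d, 0)).1, 0)).2) = (E (-(E (Zinv d, 0)).1, 0)).2 := by
        have hp : ((-(E (Zinv d, 0)).1 : Kt), (0 : K)) = -(((E (Zinv d, 0)).1, (0 : K))) := by
          simp
        rw [hp, map_neg]
        rfl
      calc Zinv (E (0, d)).2 = Zinv (E (-(E (Zinv d, 0)).1, 0)).2 := by rw [h1, h2]
        _ = -(E (Zinv d, 0)).1 := hZ1 _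
    rw [t2]
    simp only [map_neg, LinearMap.neg_apply, neg_neg]
    rw [t1]
  · -- antisymmetry of Ã₋ = -Y⁻¹ X
    intro α β
    have hα : (E (0, Yinv α)).1 = α := hY2 α
    have t1 : p α (Yinv (E (β, 0)).1) = p (E (β, 0)).1 (Yinv α) := by
      conv_lhs => rw [← hα]
      rw [hYsym, hY2]
    have t2 : Yinv (E (α, 0)).1 = -(E (0, Yinv α)).2 := by
      have hrel := hXYYW (Yinv α)
      rw [hα] at hrel
      have h1 : (E (α, 0)).1 = -((E (0, (E (0, Yinv α)).2)).1) := by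
        rw [eq_neg_iff_add_eq_zero]; exact hrel
      have h2 : -((E (0, (E (0, Yinv α)).2)).1) = (E (0, -(E (0, Yinv α)).2)).1 := by
        have hp : ((0 : Kt), -(E (0, Yinv α)).2) = -(((0 : Kt), (E (0, Yinv α)).2)) := by
          simp
        rw [hp, map_neg]
        rfl
      calc Yinv (E (α, 0)).1 = Yinv (E (0, -(E (0, Yinv α)).2)).1 := by rw [h1, h2]
        _ = -(E (0, Yinv α)).2 := hY1 _
    rw [t2]
    simp only [map_neg, neg_neg]
    rw [t1]
    have := hWX β (Yinv α)
    linarith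
end

section
/- Let K be a real Lie algebra with R : K → K satisfying the modified classical Yang–Baxter equation [R x, R y] = R([R x, y] + [x, R y]) + [x, y]. Fix real parameters η ≠ 0, μ, s = ±1. On D := K ⊕ K write elements as x = y + (μR + iη)z meaning the pair (y, z), and define E_s(y,z) := (s z, -(y)) in these coordinates, i.e. E_s x = s z - (μR + iη)y. Then [x, E_s x] = (s - η² + μ²)[y,z] + μ([R y, y] + s[R z, z]) + (μR + iη)(μ [y,z]_R), where [a,b]_R := [R a, b] + [a, R b]. -/
theorem biYangBaxter_bracket_computation
    {K : Type*} [LieRing K] [LieAlgebra ℝ K]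
    (R : K →ₗ[ℝ] K)
    (hmCYBE : ∀ x y : K, ⁅R x, R y⁆ = R (⁅R x, y⁆ + ⁅x, R y⁆) + ⁅x, y⁆)
    (s η μ : ℝ) (hs : s = 1 ∨ s = -1) (hη : η ≠ 0) :
    ∀ y z : K,
      -- `x = y + (μR + iη)z` has components `(y + μ R z, η z)` in `K^ℂ ≅ K × K`,
      -- `E_s x = s z - (μR + iη) y` has components `(s z - μ R y, -η y)`;
      -- the complexified bracket `[x, E_s x]` is computed componentwise:
      ((⁅y + μ • R z, s • z - μ • R y⁆ - ⁅η • z, (-η) • y⁆ : K),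
        (⁅y + μ • R z, (-η) • y⁆ + ⁅η • z, s • z - μ • R y⁆ : K))
      = ((s - η ^ 2 + μ ^ 2) • ⁅y, z⁆ + μ • (⁅R y, y⁆ + s • ⁅R z, z⁆)
            + μ ^ 2 • R (⁅R y, z⁆ + ⁅y, R z⁆),
         (η * μ) • (⁅R y, z⁆ + ⁅y, R z⁆)) := by
  intro y z
  have hzy : (⁅z, y⁆ : K) = -⁅y, z⁆ := by rw [← lie_skew]
  have hRzy : (⁅R z, y⁆ : K) = -⁅y, R z⁆ := by rw [← lie_skew]
  have hzRy : (⁅z, R y⁆ : K) = -⁅R y, z⁆ := by rw [← lie_skew]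
  have hyRy : (⁅y, R y⁆ : K) = -⁅R y, y⁆ := by rw [← lie_skew]
  have h := hmCYBE z y
  rw [hzy, hRzy, hzRy, map_add, map_neg, map_neg] at h
  simp only [Prod.mk.injEq, add_lie, lie_add, lie_sub, sub_lie, smul_lie, lie_smul,
    smul_add, smul_sub, smul_neg, neg_smul, h, hzy, hRzy, hzRy, hyRy, map_add, lie_self, smul_zero, lie_neg, neg_lie]
  constructor <;> module
end

section
/- Let V be a finite-dimensional real vector space with nondegenerate symmetric form B of signature (n,n), and let E₋ be a B-self-adjoint involution with B(·,E₋·) positive definite, with eigenspaces V±. Define ι± : V± → V∓ by: writing V± as graphs over a fixed Lagrangian K̃ (i.e. V± = {x̃ + (Ã ± S̃)x̃ : x̃ ∈ K̃} for a splitting V = K̃ ⊕ K, with S̃ symmetric invertible, Ã antisymmetric), set ι±(x̃ + (Ã ± S̃)x̃) := x̃ + (Ã ∓ S̃)x̃. Define E₊ on V by E₊ x± = ± ι±(x±) for x± ∈ V±, extended by linearity. Then E₊² = -1 and E₊ is B-self-adjoint. -/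
theorem eWick_rotation_gives_euclidean_operator
    {Kt K : Type*} [AddCommGroup Kt] [Module ℝ Kt] [AddCommGroup K] [Module ℝ K]
    [FiniteDimensional ℝ Kt] [FiniteDimensional ℝ K]
    -- nondegenerate pairing between the Lagrangian `K̃` and its complement `K`,
    -- inducing the split form `B((α,a),(β,b)) = ⟨α,b⟩ + ⟨β,a⟩` on `V = K̃ × K`
    (p : Kt →ₗ[ℝ] K →ₗ[ℝ] ℝ)
    (hpnd₁ : ∀ α : Kt, (∀ a : K, p α a = 0) → α = 0)
    (hpnd₂ : ∀ a : K, (∀ α : Kt, p α a = 0) → a = 0)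
    -- `S̃` symmetric, invertible and positive (so that the `±1`-eigenspaces of
    -- the Lorentzian operator `E₋` are the graphs of `Ã ± S̃` over `K̃`)
    (St : Kt →ₗ[ℝ] K) (Stinv : K →ₗ[ℝ] Kt)
    (hSt₁ : Stinv ∘ₗ St = LinearMap.id) (hSt₂ : St ∘ₗ Stinv = LinearMap.id)
    (hStsym : ∀ α β : Kt, p α (St β) = p β (St α))
    (hStpos : ∀ α : Kt, α ≠ 0 → 0 < p α (St α))
    -- `Ã` antisymmetric
    (At : Kt →ₗ[ℝ] K)
    (hAtanti : ∀ α β : Kt, p α (At β) = - p β (At α)) :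
    -- the `E`-Wick rotated operator
    -- `E₊(α,a) = (S̃⁻¹(a - Ã α), Ã S̃⁻¹(a - Ã α) - S̃ α)`
    -- maps the graph of `Ã + S̃` to the graph of `Ã - S̃` (as `ι₊`),
    (∀ x : Kt,
        (fun v : Kt × K =>
          (Stinv (v.2 - At v.1), At (Stinv (v.2 - At v.1)) - St v.1))
          (x, At x + St x) = (x, At x - St x)) ∧
    -- acts as `-ι₋` on the graph of `Ã - S̃`,
    (∀ x : Kt,
        (fun v : Kt × K =>
          (Stinv (v.2 - At v.1), At (Stinv (v.2 - At v.1)) - St v.1))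
          (x, At x - St x) = -(x, At x + St x)) ∧
    -- squares to minus the identity,
    (∀ v : Kt × K,
        (fun v : Kt × K =>
          (Stinv (v.2 - At v.1), At (Stinv (v.2 - At v.1)) - St v.1))
          ((fun v : Kt × K =>
            (Stinv (v.2 - At v.1), At (Stinv (v.2 - At v.1)) - St v.1)) v) = -v) ∧
    -- and is self-adjoint for the split form `B`
    (∀ u v : Kt × K,
        p (Stinv (u.2 - At u.1)) v.2 + p v.1 (At (Stinv (u.2 - At u.1)) - St u.1)
          = p u.1 (At (Stinv (v.2 - At v.1)) - St v.1)
            + p (Stinv (v.2 - At v.1)) u.2) := by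
  have hSS : ∀ z : K, St (Stinv z) = z := fun z => LinearMap.ext_iff.mp hSt₂ z
  have hSS' : ∀ z : Kt, Stinv (St z) = z := fun z => LinearMap.ext_iff.mp hSt₁ z
  refine ⟨?_, ?_, ?_, ?_⟩
  · intro x
    have h1 : At x + St x - At x = St x := by abel
    simp [h1, hSS']
  · intro x
    have h1 : At x - St x - At x = -(St x) := by abel
    simp [h1, hSS', Prod.neg_mk]
    abel
  · intro v
    obtain ⟨α, a⟩ := v
    simp only
    set y := Stinv (a - At α) with hy
    have h1 : At y - St α - At y = -(St α) := by abel
    have h2 : Stinv (At y - St α - At y) = -α := by rw [h1, map_neg, hSS']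
    rw [h2]
    have h3 : St y = a - At α := hSS _
    rw [Prod.neg_mk]
    refine Prod.ext rfl ?_
    simp only [map_neg, h3]
    abel
  · intro u v
    obtain ⟨α, a⟩ := u
    obtain ⟨β, b⟩ := v
    simp only
    set x := Stinv (a - At α) with hx
    set y := Stinv (b - At β) with hyy
    have hxa : St x = a - At α := hSS _
    have hyb : St y = b - At β := hSS _
    have hb : b = St y + At β := by rw [hyb]; abel
    have ha : a = St x + At α := by rw [hxa]; abel
    rw [hb, ha]
    simp only [map_add, map_sub]
    have e1 : p x (St y) = p y (St x) := hStsym x y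
    have e2 : p x (At β) = - p β (At x) := hAtanti x β
    have e3 : p y (At α) = - p α (At y) := hAtanti y α
    have e4 : p β (St α) = p α (St β) := hStsym β α
    linarith
end
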